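/- arXiv:0802.2645 — 5 statements merged into one kernel-verified Lean document; each statement's English description precedes it below -/
import Mathlib

section
/- Let {X_i; i ≥ 1} be a sequence of negatively associated random variables and let {a_{nj}; 1 ≤ j ≤ n, n ≥ 1} be an array of real numbers. Then there exists a constant A > 0 such that for all n ≥ 1 and all ε > 0: (1/2) ∑_{j=1}^n P(|a_{nj} X_j| > ε) ≤ (1 + A) P( max_{1≤j≤n} |a_{nj} X_j| > ε ) + ( ∑_{j=1}^n P(|a_{nj} X_j| > ε) ) · P( max_{1≤j≤n} |a_{nj} X_j| > ε ). -/
/-!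
Split each event `|a_{nj} X_j| > ε` into the upper tail `|a_{nj}| X_j > ε` and the lower tail
`|a_{nj}| X_j < -ε`. Upper tails are increasing functions of distinct coordinates, so negative
association makes them pairwise negatively correlated; lower tails are too, because passing to
complements preserves the sign of a covariance. For pairwise negatively correlated events `Fⱼ`
inside `G`, with `N = ∑ 1_{Fⱼ}` and `S = E N`, the second moment satisfies `E N² ≤ S (1 + S)`, and
integrating `2 t N ≤ N² + t² 1_G` at `t = 1 + S` gives `S ≤ P(G) (1 + S)`. Adding the bounds for
the two tails, with `G` the event that the maximum exceeds `ε`, yields the claim with `A = 1`.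
-/

open MeasureTheory Finset

noncomputable section

/-- A family of real-valued random variables is *negatively associated* if for every
pair of disjoint nonempty finite index sets `A` and `B`, and every pair of functions
`f`, `g` which are coordinatewise nondecreasing in the coordinates of `A` (resp. `B`),
the covariance of `f` and `g` applied to the family is nonpositive (whenever all the
relevant integrals exist). -/
def NegAssoc {Ω : Type*} [MeasurableSpace Ω] (μ : Measure Ω)
    {ι : Type*} (X : ι → Ω → ℝ) : Prop :=
  ∀ (A B : Finset ι), A.Nonempty → B.Nonempty → Disjoint A B →
    ∀ f g : (ι → ℝ) → ℝ,
      (∀ x y : ι → ℝ, (∀ i ∈ A, x i ≤ y i) → f x ≤ f y) →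
      (∀ x y : ι → ℝ, (∀ j ∈ B, x j ≤ y j) → g x ≤ g y) →
      Integrable (fun ω => f (fun i => X i ω)) μ →
      Integrable (fun ω => g (fun i => X i ω)) μ →
      Integrable (fun ω => f (fun i => X i ω) * g (fun i => X i ω)) μ →
      ∫ ω, f (fun i => X i ω) * g (fun i => X i ω) ∂μ ≤
        (∫ ω, f (fun i => X i ω) ∂μ) * ∫ ω, g (fun i => X i ω) ∂μ

/-- `partialSum X n ω = ∑_{i=1}^n X_i(ω)`. -/
def partialSum {Ω : Type*} (X : ℕ → Ω → ℝ) (n : ℕ) (ω : Ω) : ℝ :=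
  ∑ i ∈ Finset.Icc 1 n, X i ω

/-- `maxPS X n ω = max_{1 ≤ k ≤ n} |S_k(ω)|`. -/
def maxPS {Ω : Type*} (X : ℕ → Ω → ℝ) (n : ℕ) (ω : Ω) : ℝ :=
  (((Finset.Icc 1 n).sup fun k => ‖partialSum X k ω‖₊ : NNReal) : ℝ)

/-- `maxA a X n ω = max_{1 ≤ j ≤ n} |a_{nj} X_j(ω)|`. -/
def maxA {Ω : Type*} (a : ℕ → ℕ → ℝ) (X : ℕ → Ω → ℝ) (n : ℕ) (ω : Ω) : ℝ :=
  (((Finset.Icc 1 n).sup fun j => ‖a n j * X j ω‖₊ : NNReal) : ℝ)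

open Set

theorem IsUpperSet.indicator_one_le {α : Type*} [Preorder α] {P : Set α} (hP : IsUpperSet P)
    {x y : α} (hxy : x ≤ y) : P.indicator (1 : α → ℝ) x ≤ P.indicator 1 y := by
  by_cases hx : x ∈ P
  · simp [hx, hP hxy hx]
  · simp [hx, indicator_nonneg]

theorem lt_abs_mul_iff {ε c x : ℝ} : ε < |c * x| ↔ ε < |c| * x ∨ |c| * x < -ε := by
  rw [abs_mul, ← abs_abs c, ← abs_mul, lt_abs, abs_abs, lt_neg]

theorem Finset.sum_Icc_one_eq_sum_range {M : Type*} [AddCommMonoid M] (f : ℕ → M) (n : ℕ) :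
    ∑ j ∈ Finset.Icc 1 n, f j = ∑ k ∈ range n, f (k + 1) := by
  rw [range_eq_Ico, sum_Ico_add' f 0 n 1, zero_add, Finset.Ico_add_one_right_eq_Icc]

theorem sq_sum_indicator_one {α ι : Type*} {T : Finset ι} {F : ι → Set α} (x : α) :
    (∑ j ∈ T, (F j).indicator (1 : α → ℝ) x) ^ 2 = ∑ i ∈ T, ∑ j ∈ T, (F i ∩ F j).indicator 1 x := by
  simp only [sq, sum_mul_sum, inter_indicator_one, Pi.mul_apply]

section Events

variable {Ω ι : Type*} [MeasurableSpace Ω] {μ : Measure Ω}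

theorem measureReal_inter_le_mul_of_compl [IsProbabilityMeasure μ] {s t : Set Ω}
    (hs : MeasurableSet s) (ht : MeasurableSet t)
    (h : μ.real (sᶜ ∩ tᶜ) ≤ μ.real sᶜ * μ.real tᶜ) : μ.real (s ∩ t) ≤ μ.real s * μ.real t := by
  rw [← compl_union, probReal_compl_eq_one_sub (hs.union ht), probReal_compl_eq_one_sub hs,
    probReal_compl_eq_one_sub ht] at h
  linarith [measureReal_union_add_inter (μ := μ) (s := s) ht]

theorem sum_measureReal_inter_le_mul {T : Finset ι} {F : ι → Set Ω}
    (hpair : ∀ i ∈ T, ∀ j ∈ T, i ≠ j → μ.real (F i ∩ F j) ≤ μ.real (F i) * μ.real (F j))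
    {i : ι} (hi : i ∈ T) :
    ∑ j ∈ T, μ.real (F i ∩ F j) ≤ μ.real (F i) * (1 + ∑ j ∈ T, μ.real (F j)) := by
  classical
  rw [← add_sum_erase T _ hi, inter_self, mul_add, mul_one, mul_sum]
  gcongr
  calc ∑ j ∈ T.erase i, μ.real (F i ∩ F j)
      ≤ ∑ j ∈ T.erase i, μ.real (F i) * μ.real (F j) :=
        sum_le_sum fun j hj => hpair i hi j (mem_of_mem_erase hj) (ne_of_mem_erase hj).symm
    _ ≤ ∑ j ∈ T, μ.real (F i) * μ.real (F j) :=
        sum_le_sum_of_subset_of_nonneg (erase_subset i T) fun _ _ _ => by positivity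

variable [IsFiniteMeasure μ] {T : Finset ι} {F : ι → Set Ω}

theorem integrable_sum_indicator_one (hF : ∀ j ∈ T, MeasurableSet (F j)) :
    Integrable (fun ω => ∑ j ∈ T, (F j).indicator (1 : Ω → ℝ) ω) μ :=
  integrable_finsetSum T fun j hj => (integrable_const 1).indicator (hF j hj)

theorem integral_sum_indicator_one (hF : ∀ j ∈ T, MeasurableSet (F j)) :
    ∫ ω, ∑ j ∈ T, (F j).indicator 1 ω ∂μ = ∑ j ∈ T, μ.real (F j) := by
  rw [integral_finsetSum T fun j hj => (integrable_const 1).indicator (hF j hj)]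
  exact sum_congr rfl fun j hj => integral_indicator_one (hF j hj)

theorem integrable_sum_sum_indicator_one (hF : ∀ j ∈ T, MeasurableSet (F j)) :
    Integrable (fun ω => ∑ i ∈ T, ∑ j ∈ T, (F i ∩ F j).indicator (1 : Ω → ℝ) ω) μ :=
  integrable_finsetSum T fun i hi => integrable_sum_indicator_one fun j hj =>
    (hF i hi).inter (hF j hj)

theorem integral_sum_sum_indicator_one (hF : ∀ j ∈ T, MeasurableSet (F j)) :
    ∫ ω, ∑ i ∈ T, ∑ j ∈ T, (F i ∩ F j).indicator 1 ω ∂μ =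
      ∑ i ∈ T, ∑ j ∈ T, μ.real (F i ∩ F j) := by
  rw [integral_finsetSum T fun i hi => integrable_sum_indicator_one fun j hj =>
    (hF i hi).inter (hF j hj)]
  exact sum_congr rfl fun i hi => integral_sum_indicator_one fun j hj => (hF i hi).inter (hF j hj)

theorem sum_measureReal_le_measureReal_biUnion_mul (hF : ∀ j ∈ T, MeasurableSet (F j))
    (hpair : ∀ i ∈ T, ∀ j ∈ T, i ≠ j → μ.real (F i ∩ F j) ≤ μ.real (F i) * μ.real (F j)) :
    ∑ j ∈ T, μ.real (F j) ≤ μ.real (⋃ j ∈ T, F j) * (1 + ∑ j ∈ T, μ.real (F j)) := by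
  set S := ∑ j ∈ T, μ.real (F j)
  set G := ⋃ j ∈ T, F j
  set N : Ω → ℝ := fun ω => ∑ j ∈ T, (F j).indicator 1 ω
  have hG : MeasurableSet G := T.measurableSet_biUnion hF
  have hS : 0 ≤ S := sum_nonneg fun _ _ => measureReal_nonneg
  have hpt : ∀ ω, 2 * (1 + S) * N ω ≤
      ∑ i ∈ T, ∑ j ∈ T, (F i ∩ F j).indicator 1 ω + (1 + S) ^ 2 * G.indicator 1 ω := fun ω => by
    rw [← sq_sum_indicator_one]
    change 2 * (1 + S) * N ω ≤ N ω ^ 2 + _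
    by_cases hω : ω ∈ G
    · rw [indicator_of_mem hω, Pi.one_apply, mul_one]
      linarith [two_mul_le_add_sq (N ω) (1 + S)]
    · have hN : N ω = 0 := sum_eq_zero fun j hj =>
        indicator_of_notMem (fun h => hω (mem_biUnion hj h)) _
      simp [hN, hω]
  have hG1 : Integrable (G.indicator (1 : Ω → ℝ)) μ := (integrable_const 1).indicator hG
  have hint : ∫ ω, 2 * (1 + S) * N ω ∂μ ≤
      ∫ ω, (∑ i ∈ T, ∑ j ∈ T, (F i ∩ F j).indicator 1 ω + (1 + S) ^ 2 * G.indicator 1 ω) ∂μ :=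
    integral_mono ((integrable_sum_indicator_one hF).const_mul _)
      ((integrable_sum_sum_indicator_one hF).add (hG1.const_mul _)) hpt
  rw [integral_const_mul, integral_sum_indicator_one hF,
    integral_add (integrable_sum_sum_indicator_one hF) (hG1.const_mul _),
    integral_sum_sum_indicator_one hF, integral_const_mul, integral_indicator_one hG] at hint
  have hsecond : ∑ i ∈ T, ∑ j ∈ T, μ.real (F i ∩ F j) ≤ S * (1 + S) := by
    rw [sum_mul]
    exact sum_le_sum fun i hi => sum_measureReal_inter_le_mul hpair hi
  nlinarith

theorem sum_measureReal_le_measureReal_mul_of_subset (hF : ∀ j ∈ T, MeasurableSet (F j))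
    (hpair : ∀ i ∈ T, ∀ j ∈ T, i ≠ j → μ.real (F i ∩ F j) ≤ μ.real (F i) * μ.real (F j))
    {G : Set Ω} (hFG : ∀ j ∈ T, F j ⊆ G) :
    ∑ j ∈ T, μ.real (F j) ≤ μ.real G * (1 + ∑ j ∈ T, μ.real (F j)) :=
  (sum_measureReal_le_measureReal_biUnion_mul hF hpair).trans <|
    mul_le_mul_of_nonneg_right (measureReal_mono (iUnion₂_subset hFG)) (by positivity)

end Events

namespace NegAssoc

variable {Ω ι : Type*} [MeasurableSpace Ω] {μ : Measure Ω} {Y : ι → Ω → ℝ}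

theorem measureReal_inter_le_mul_of_isUpperSet [IsFiniteMeasure μ] (hNA : NegAssoc μ Y)
    (hY : ∀ i, Measurable (Y i)) {i j : ι} (hij : i ≠ j) {P Q : Set ℝ}
    (hP : IsUpperSet P) (hQ : IsUpperSet Q) (hPm : MeasurableSet P) (hQm : MeasurableSet Q) :
    μ.real (Y i ⁻¹' P ∩ Y j ⁻¹' Q) ≤ μ.real (Y i ⁻¹' P) * μ.real (Y j ⁻¹' Q) := by
  have hPi : MeasurableSet (Y i ⁻¹' P) := hY i hPm
  have hQj : MeasurableSet (Y j ⁻¹' Q) := hY j hQm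
  have hf : (fun ω => P.indicator (1 : ℝ → ℝ) (Y i ω)) = (Y i ⁻¹' P).indicator 1 := by
    simp only [← indicator_comp_right, Pi.one_comp]
  have hg : (fun ω => Q.indicator (1 : ℝ → ℝ) (Y j ω)) = (Y j ⁻¹' Q).indicator 1 := by
    simp only [← indicator_comp_right, Pi.one_comp]
  have hfg : (fun ω => P.indicator (1 : ℝ → ℝ) (Y i ω) * Q.indicator 1 (Y j ω)) =
      (Y i ⁻¹' P ∩ Y j ⁻¹' Q).indicator 1 := by
    rw [inter_indicator_one, ← hf, ← hg]; rfl
  have key := hNA {i} {j} (singleton_nonempty i) (singleton_nonempty j)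
    (disjoint_singleton.2 hij) (fun x => P.indicator 1 (x i)) (fun x => Q.indicator 1 (x j))
    (fun x y h => hP.indicator_one_le (h i (mem_singleton_self i)))
    (fun x y h => hQ.indicator_one_le (h j (mem_singleton_self j)))
  simp only [hf, hg, hfg] at key
  rw [integral_indicator_one hPi, integral_indicator_one hQj,
    integral_indicator_one (hPi.inter hQj)] at key
  exact key ((integrable_const 1).indicator hPi) ((integrable_const 1).indicator hQj)
    ((integrable_const 1).indicator (hPi.inter hQj))

theorem measureReal_inter_le_mul_of_isLowerSet [IsProbabilityMeasure μ] (hNA : NegAssoc μ Y)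
    (hY : ∀ i, Measurable (Y i)) {i j : ι} (hij : i ≠ j) {P Q : Set ℝ}
    (hP : IsLowerSet P) (hQ : IsLowerSet Q) (hPm : MeasurableSet P) (hQm : MeasurableSet Q) :
    μ.real (Y i ⁻¹' P ∩ Y j ⁻¹' Q) ≤ μ.real (Y i ⁻¹' P) * μ.real (Y j ⁻¹' Q) := by
  refine measureReal_inter_le_mul_of_compl (hY i hPm) (hY j hQm) ?_
  rw [← preimage_compl, ← preimage_compl]
  exact hNA.measureReal_inter_le_mul_of_isUpperSet hY hij hP.compl hQ.compl hPm.compl hQm.compl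

variable {T : Finset ι} {P : ι → Set ℝ} {G : Set Ω}

theorem sum_measureReal_le_of_isUpperSet [IsFiniteMeasure μ] (hNA : NegAssoc μ Y)
    (hY : ∀ i, Measurable (Y i)) (hP : ∀ j, IsUpperSet (P j)) (hPm : ∀ j, MeasurableSet (P j))
    (hG : ∀ j ∈ T, Y j ⁻¹' P j ⊆ G) :
    ∑ j ∈ T, μ.real (Y j ⁻¹' P j) ≤ μ.real G * (1 + ∑ j ∈ T, μ.real (Y j ⁻¹' P j)) :=
  sum_measureReal_le_measureReal_mul_of_subset (fun j _ => hY j (hPm j))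
    (fun i _ j _ hij => hNA.measureReal_inter_le_mul_of_isUpperSet hY hij (hP i) (hP j)
      (hPm i) (hPm j)) hG

theorem sum_measureReal_le_of_isLowerSet [IsProbabilityMeasure μ] (hNA : NegAssoc μ Y)
    (hY : ∀ i, Measurable (Y i)) (hP : ∀ j, IsLowerSet (P j)) (hPm : ∀ j, MeasurableSet (P j))
    (hG : ∀ j ∈ T, Y j ⁻¹' P j ⊆ G) :
    ∑ j ∈ T, μ.real (Y j ⁻¹' P j) ≤ μ.real G * (1 + ∑ j ∈ T, μ.real (Y j ⁻¹' P j)) :=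
  sum_measureReal_le_measureReal_mul_of_subset (fun j _ => hY j (hPm j))
    (fun i _ j _ hij => hNA.measureReal_inter_le_mul_of_isLowerSet hY hij (hP i) (hP j)
      (hPm i) (hPm j)) hG

theorem sum_measureReal_lt_abs_mul_le [IsProbabilityMeasure μ] (hNA : NegAssoc μ Y)
    (hY : ∀ i, Measurable (Y i)) (c : ι → ℝ) {ε : ℝ} (hε : 0 < ε)
    (hG : ∀ j ∈ T, {ω | ε < |c j * Y j ω|} ⊆ G) :
    ∑ j ∈ T, μ.real {ω | ε < |c j * Y j ω|} ≤
      μ.real G * (2 + ∑ j ∈ T, μ.real {ω | ε < |c j * Y j ω|}) := by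
  set U : ι → Set ℝ := fun j => (|c j| * ·) ⁻¹' Ioi ε
  set L : ι → Set ℝ := fun j => (|c j| * ·) ⁻¹' Iio (-ε)
  have hUm : ∀ j, MeasurableSet (U j) := fun j =>
    measurableSet_Ioi.preimage (measurable_const_mul _)
  have hLm : ∀ j, MeasurableSet (L j) := fun j =>
    measurableSet_Iio.preimage (measurable_const_mul _)
  have htail : ∀ j, {ω | ε < |c j * Y j ω|} = Y j ⁻¹' U j ∪ Y j ⁻¹' L j := fun j => by
    ext ω; exact lt_abs_mul_iff
  have hdisj : ∀ j, Disjoint (Y j ⁻¹' U j) (Y j ⁻¹' L j) := fun j => disjoint_left.2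
    fun ω (h1 : ε < |c j| * Y j ω) (h2 : |c j| * Y j ω < -ε) => by linarith
  have hU := hNA.sum_measureReal_le_of_isUpperSet hY
    (fun j => (isUpperSet_Ioi ε).preimage (monotone_mul_left_of_nonneg (abs_nonneg (c j)))) hUm
    fun j hj => subset_union_left.trans (htail j ▸ hG j hj)
  have hL := hNA.sum_measureReal_le_of_isLowerSet hY
    (fun j => (isLowerSet_Iio _).preimage (monotone_mul_left_of_nonneg (abs_nonneg (c j)))) hLm
    fun j hj => subset_union_right.trans (htail j ▸ hG j hj)
  have hsplit : ∑ j ∈ T, μ.real {ω | ε < |c j * Y j ω|} =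
      ∑ j ∈ T, μ.real (Y j ⁻¹' U j) + ∑ j ∈ T, μ.real (Y j ⁻¹' L j) := by
    rw [← sum_add_distrib]
    exact sum_congr rfl fun j _ => by rw [htail, measureReal_union (hdisj j) (hY j (hLm j))]
  rw [hsplit]
  linarith

end NegAssoc

theorem abs_mul_le_maxA {Ω : Type*} (a : ℕ → ℕ → ℝ) (X : ℕ → Ω → ℝ) {n j : ℕ}
    (hj : j ∈ Finset.Icc 1 n) (ω : Ω) : |a n j * X j ω| ≤ maxA a X n ω := by
  rw [← Real.norm_eq_abs, ← coe_nnnorm]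
  exact NNReal.coe_le_coe.2 (le_sup (f := fun k => ‖a n k * X k ω‖₊) hj)

/-- Lemma 3.1 (first part): for negatively associated random variables and an array of
real weights, a maximal-term lower bound on the sum of tail probabilities. -/
theorem stmt_2 {Ω : Type*} [MeasurableSpace Ω] (μ : Measure Ω) [IsProbabilityMeasure μ]
    (X : ℕ → Ω → ℝ) (hmeas : ∀ i, Measurable (X i))
    (hNA : NegAssoc μ (fun i => X (i + 1)))
    (a : ℕ → ℕ → ℝ) :
    ∃ A : ℝ, 0 < A ∧ ∀ n : ℕ, 1 ≤ n → ∀ ε : ℝ, 0 < ε →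
      (1 / 2) * ∑ j ∈ Finset.Icc 1 n, (μ {ω | ε < |a n j * X j ω|}).toReal ≤
        (1 + A) * (μ {ω | ε < maxA a X n ω}).toReal +
          (∑ j ∈ Finset.Icc 1 n, (μ {ω | ε < |a n j * X j ω|}).toReal) *
            (μ {ω | ε < maxA a X n ω}).toReal := by
  refine ⟨1, one_pos, fun n _ ε hε => ?_⟩
  have key := hNA.sum_measureReal_lt_abs_mul_le (T := range n) (G := {ω | ε < maxA a X n ω})
    (fun i => hmeas (i + 1)) (fun k => a n (k + 1)) hε fun k hk ω hω =>
      hω.trans_le (abs_mul_le_maxA a X (Finset.mem_Icc.2 ⟨by omega, by simpa using hk⟩) ω)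
  simp only [← measureReal_def, Finset.sum_Icc_one_eq_sum_range]
  have hG : 0 ≤ μ.real {ω | ε < maxA a X n ω} := measureReal_nonneg
  have hGS : 0 ≤ μ.real {ω | ε < maxA a X n ω} *
      ∑ k ∈ range n, μ.real {ω | ε < |a n (k + 1) * X (k + 1) ω|} := by positivity
  linarith

end
end

section
/- Let α ≥ −1 and β ≥ 0, and let {Y_n; n ≥ 1} be a nondecreasing sequence of nonnegative random variables (i.e., 0 ≤ Y_1 ≤ Y_2 ≤ ... pointwise). If ∑_{n≥1} n^α P(Y_n > x n^β) < ∞ for all x > 0, then lim_{n→∞} P(Y_n > x n^β) = 0 for all x > 0. -/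
/-!
Fix `x > 0` and put `x' = x / 2^β`. For `n ≤ m < 2n`, monotonicity of `Y` gives
`{Y_n > x n^β} ⊆ {Y_m > x' m^β}` and `m^α ≥ min 1 (2^α) · n^α`, so summing over this block of
`n` indices,
`min 1 (2^α) · n^(1+α) · P(Y_n > x n^β) ≤ ∑_{n ≤ m < 2n} m^α P(Y_m > x' m^β)`.
Since `α ≥ -1` the factor `n^(1+α)` is at least `1`, and the right side is bounded by a tail of
the convergent series for `x'`, hence tends to `0`.
-/

open MeasureTheory Finset Filter Topology

lemma ENNReal.tendsto_nhds_zero_of_const_mul_le_tsum_nat_add {f g : ℕ → ENNReal} {c : ENNReal}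
    (hf : ∑' k, f k ≠ ⊤) (hc : c ≠ 0) (hgf : ∀ n, c * g n ≤ ∑' k, f (k + n)) :
    Tendsto g atTop (𝓝 0) := by
  have htail : Tendsto (fun n => (∑' k, f (k + n)) / c) atTop (𝓝 0) := by
    simpa using ENNReal.Tendsto.div_const (ENNReal.tendsto_sum_nat_add f hf) (Or.inr hc)
  refine tendsto_of_tendsto_of_tendsto_of_le_of_le tendsto_const_nhds htail (fun _ => zero_le)
    fun n => ?_
  have htail_ne_top : ∑' k, f (k + n) ≠ ⊤ :=
    ((ENNReal.tsum_comp_le_tsum_of_injective (add_left_injective n) f).trans_lt hf.lt_top).ne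
  rw [ENNReal.le_div_iff_mul_le (Or.inl hc) (Or.inr htail_ne_top), mul_comm]
  exact hgf n

lemma Real.min_one_two_rpow_mul_rpow_le {α N M : ℝ} (hN : 0 < N) (hNM : N ≤ M) (hM : M ≤ 2 * N) :
    min 1 (2 ^ α) * N ^ α ≤ M ^ α := by
  rcases le_or_gt 0 α with hα | hα
  · calc min 1 (2 ^ α) * N ^ α ≤ 1 * N ^ α := by gcongr; exact min_le_left _ _
      _ ≤ M ^ α := by rw [one_mul]; exact Real.rpow_le_rpow hN.le hNM hα
  · calc min 1 (2 ^ α) * N ^ α ≤ 2 ^ α * N ^ α := by gcongr; exact min_le_right _ _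
      _ = (2 * N) ^ α := (Real.mul_rpow zero_le_two hN.le).symm
      _ ≤ M ^ α := Real.rpow_le_rpow_of_nonpos (hN.trans_le hNM) hM hα.le

section Exceedance

variable {Ω : Type*} [MeasurableSpace Ω] (μ : Measure Ω) {Y : ℕ → Ω → ℝ} {α β x : ℝ}

lemma measure_mul_rpow_lt_le_of_le_two_mul (hβ : 0 ≤ β) (hY : ∀ ω, Monotone (Y · ω))
    (hx : 0 ≤ x) {n m : ℕ} (hnm : n ≤ m) (hm : m ≤ 2 * n) :
    μ {ω | x * (n : ℝ) ^ β < Y n ω} ≤ μ {ω | x / 2 ^ β * (m : ℝ) ^ β < Y m ω} := by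
  refine measure_mono fun ω (hω : x * (n : ℝ) ^ β < Y n ω) => ?_
  have hm' : (m : ℝ) ≤ 2 * n := by exact_mod_cast hm
  show x / 2 ^ β * (m : ℝ) ^ β < Y m ω
  calc x / 2 ^ β * (m : ℝ) ^ β ≤ x / 2 ^ β * (2 * n) ^ β := by gcongr
    _ = x * (n : ℝ) ^ β := by
      rw [Real.mul_rpow zero_le_two n.cast_nonneg]
      field_simp
    _ < Y n ω := hω
    _ ≤ Y m ω := hY ω hnm

lemma ofReal_mul_measure_le_sum_Ico (hα : -1 ≤ α) (hβ : 0 ≤ β) (hY : ∀ ω, Monotone (Y · ω))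
    (hx : 0 ≤ x) {n : ℕ} (hn : 0 < n) :
    ENNReal.ofReal (min 1 (2 ^ α)) * μ {ω | x * (n : ℝ) ^ β < Y n ω} ≤
      ∑ m ∈ Ico n (2 * n),
        ENNReal.ofReal ((m : ℝ) ^ α) * μ {ω | x / 2 ^ β * (m : ℝ) ^ β < Y m ω} := by
  set c := min 1 ((2 : ℝ) ^ α)
  have hc : 0 ≤ c := le_min zero_le_one (by positivity)
  have hn' : (0 : ℝ) < n := by exact_mod_cast hn
  have hc_le : c ≤ n * (c * (n : ℝ) ^ α) := by
    have hpow : (n : ℝ) * (n : ℝ) ^ α = (n : ℝ) ^ (1 + α) := by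
      rw [Real.rpow_add hn', Real.rpow_one]
    have : 1 ≤ (n : ℝ) ^ (1 + α) := Real.one_le_rpow (by exact_mod_cast hn) (by linarith)
    nlinarith
  calc ENNReal.ofReal c * μ {ω | x * (n : ℝ) ^ β < Y n ω}
      ≤ n * ENNReal.ofReal (c * (n : ℝ) ^ α) * μ {ω | x * (n : ℝ) ^ β < Y n ω} := by
        rw [← ENNReal.ofReal_natCast, ← ENNReal.ofReal_mul n.cast_nonneg]
        gcongr
    _ = ∑ m ∈ Ico n (2 * n),
          ENNReal.ofReal (c * (n : ℝ) ^ α) * μ {ω | x * (n : ℝ) ^ β < Y n ω} := by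
        rw [sum_const, Nat.card_Ico, nsmul_eq_mul, mul_assoc, two_mul, Nat.add_sub_cancel]
    _ ≤ _ := by
      refine sum_le_sum fun m hm => ?_
      obtain ⟨hnm, hm2n⟩ := mem_Ico.mp hm
      have hnm' : (n : ℝ) ≤ m := by exact_mod_cast hnm
      have hm2n' : (m : ℝ) ≤ 2 * n := by exact_mod_cast hm2n.le
      exact mul_le_mul'
        (ENNReal.ofReal_le_ofReal (Real.min_one_two_rpow_mul_rpow_le hn' hnm' hm2n'))
        (measure_mul_rpow_lt_le_of_le_two_mul μ hβ hY hx hnm hm2n.le)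

end Exceedance

theorem stmt_6_general {Ω : Type*} [MeasurableSpace Ω] (μ : Measure Ω)
    (α β : ℝ) (hα : -1 ≤ α) (hβ : 0 ≤ β)
    (Y : ℕ → Ω → ℝ)
    (hmono : ∀ n ω, Y n ω ≤ Y (n + 1) ω)
    (hsum : ∀ x : ℝ, 0 < x →
      ∑' n : ℕ, ENNReal.ofReal (((n : ℝ) + 1) ^ α) *
        μ {ω | x * ((n : ℝ) + 1) ^ β < Y (n + 1) ω} < ⊤) :
    ∀ x : ℝ, 0 < x →
      Filter.Tendsto (fun n : ℕ => μ {ω | x * (n : ℝ) ^ β < Y n ω})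
        Filter.atTop (nhds 0) := by
  intro x hx
  have hY : ∀ ω, Monotone (Y · ω) := fun ω => monotone_nat_of_le_succ fun n => hmono n ω
  set F : ℕ → ENNReal := fun m =>
    ENNReal.ofReal ((m : ℝ) ^ α) * μ {ω | x / 2 ^ β * (m : ℝ) ^ β < Y m ω}
  have hF : ∑' k, F (k + 1) ≠ ⊤ := by
    simpa [F] using (hsum (x / 2 ^ β) (by positivity)).ne
  have hc : ENNReal.ofReal (min 1 (2 ^ α)) ≠ 0 :=
    (ENNReal.ofReal_pos.mpr (lt_min one_pos (by positivity))).ne'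
  refine (tendsto_add_atTop_iff_nat 1).mp
    (ENNReal.tendsto_nhds_zero_of_const_mul_le_tsum_nat_add hF hc fun n => ?_)
  calc _ ≤ ∑ m ∈ Ico (n + 1) (2 * (n + 1)), F m :=
        ofReal_mul_measure_le_sum_Ico μ hα hβ hY hx.le n.succ_pos
    _ = ∑ k ∈ range (n + 1), F (k + n + 1) := by
        rw [sum_Ico_eq_sum_range]
        exact sum_congr (by congr 1; omega) fun k _ => congrArg F (by omega)
    _ ≤ ∑' k, F (k + n + 1) := ENNReal.sum_le_tsum _

/-- Lemma 3.4: if `∑_{n ≥ 1} n^α P(Y_n > x n^β) < ∞` for all `x > 0`, for a nondecreasing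
sequence of nonnegative random variables `Y_n`, then `P(Y_n > x n^β) → 0` for all `x > 0`. -/
theorem stmt_6 {Ω : Type*} [MeasurableSpace Ω] (μ : Measure Ω) [IsProbabilityMeasure μ]
    (α β : ℝ) (hα : -1 ≤ α) (hβ : 0 ≤ β)
    (Y : ℕ → Ω → ℝ) (hmeas : ∀ n, Measurable (Y n))
    (hnonneg : ∀ n ω, 0 ≤ Y n ω) (hmono : ∀ n ω, Y n ω ≤ Y (n + 1) ω)
    (hsum : ∀ x : ℝ, 0 < x →
      ∑' n : ℕ, ENNReal.ofReal (((n : ℝ) + 1) ^ α) *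
        μ {ω | x * ((n : ℝ) + 1) ^ β < Y (n + 1) ω} < ⊤) :
    ∀ x : ℝ, 0 < x →
      Filter.Tendsto (fun n : ℕ => μ {ω | x * (n : ℝ) ^ β < Y n ω})
        Filter.atTop (nhds 0) :=
  stmt_6_general μ α β hα hβ Y hmono hsum
end

section
/- Let {S_n; n ≥ 1} be any sequence of random variables and let r ∈ ℝ, p > 0, q > 0. Then for every ε > 0: ∫_ε^∞ ∑_{n≥1} n^{r−2} P( |S_n| > x^q n^{1/p} ) dx = ∑_{n≥1} n^{r−2−1/(pq)} E( |S_n|^{1/q} − ε n^{1/(pq)} )⁺ (as an identity in [0, ∞]). -/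
/-!
For `x > 0` the event `|S_n| > x^q n^(1/p)` is `x c_n < Y_n` with `c_n = n^(1/(pq))` and
`Y_n = |S_n|^(1/q)`. The layer-cake formula, shifted to start at `ε`, evaluates
`∫_ε^∞ P(x c_n < Y_n) dx = c_n⁻¹ E(Y_n - ε c_n)⁺`, and by Tonelli the sum over `n` may be
taken outside the integral.
-/

open MeasureTheory Set

theorem rpow_mul_rpow_lt_iff {x N s p q : ℝ} (hx : 0 ≤ x) (hN : 0 ≤ N) (hs : 0 ≤ s)
    (hq : 0 < q) : x ^ q * N ^ (1 / p) < s ↔ x * N ^ (1 / (p * q)) < s ^ (1 / q) := by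
  rw [one_div q, Real.lt_rpow_inv_iff_of_pos (by positivity) hs hq,
    Real.mul_rpow hx (by positivity), ← Real.rpow_mul hN, one_div_mul_eq_div,
    div_mul_cancel_right₀ hq.ne', one_div]

section

variable {α : Type*} [MeasurableSpace α] (μ : Measure α) {f : α → ℝ} {c : ℝ}

theorem setLIntegral_Ioi_measure_lt (hf : AEMeasurable f μ) (a : ℝ) :
    ∫⁻ t in Ioi a, μ {ω | t < f ω} = ∫⁻ ω, ENNReal.ofReal (f ω - a) ∂μ := by
  have hshift :
      ∫⁻ t in Ioi 0, μ {ω | t + a < f ω} = ∫⁻ t in Ioi a, μ {ω | t < f ω} := by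
    simpa only [image_add_const_Ioi, zero_add] using
      (measurePreserving_add_right volume a).setLIntegral_comp_emb
        (measurableEmbedding_addRight a) (fun t => μ {ω | t < f ω}) (Ioi 0)
  have hpos : ∀ t ∈ Ioi (0 : ℝ), {ω | t + a < f ω} = {ω | t < max (f ω - a) 0} := by
    intro t (ht : 0 < t)
    ext ω
    simp only [mem_ofPred_eq, lt_max_iff, lt_sub_iff_add_lt]
    exact ⟨Or.inl, Or.rec id fun h => absurd h ht.not_gt⟩
  rw [← hshift, setLIntegral_congr_fun measurableSet_Ioi (fun t ht => by rw [hpos t ht]),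
    ← lintegral_eq_lintegral_meas_lt μ (f := fun ω => max (f ω - a) 0)
      (ae_of_all _ fun _ => le_max_right _ _) ((hf.sub_const a).max aemeasurable_const)]
  simp only [ENNReal.ofReal_max, ENNReal.ofReal_zero, zero_le, max_eq_left]

theorem measurable_measure_mul_lt (hc : 0 ≤ c) :
    Measurable fun x : ℝ => μ {ω | x * c < f ω} :=
  Antitone.measurable fun _ _ hxy =>
    measure_mono fun _ h => lt_of_le_of_lt (mul_le_mul_of_nonneg_right hxy hc) h

theorem setLIntegral_Ioi_measure_mul_lt (hc : 0 < c) (hf : AEMeasurable f μ) (a : ℝ) :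
    ∫⁻ x in Ioi a, μ {ω | x * c < f ω} =
      ENNReal.ofReal c⁻¹ * ∫⁻ ω, ENNReal.ofReal (f ω - a * c) ∂μ := by
  have hdiv : ∀ x, {ω | x * c < f ω} = {ω | x < f ω / c} := fun x => by
    simp only [lt_div_iff₀ hc]
  have hscale : ∀ ω, ENNReal.ofReal (f ω / c - a) =
      ENNReal.ofReal c⁻¹ * ENNReal.ofReal (f ω - a * c) := fun ω => by
    rw [← ENNReal.ofReal_mul (inv_nonneg.2 hc.le)]
    congr 1
    field_simp
  simp_rw [hdiv, setLIntegral_Ioi_measure_lt μ (hf.div_const c), hscale,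
    lintegral_const_mul' _ _ ENNReal.ofReal_ne_top]

end

theorem stmt_8_general {Ω : Type*} [MeasurableSpace Ω] (μ : Measure Ω)
    (S : ℕ → Ω → ℝ) (hS : ∀ n, Measurable (S n))
    (r p q : ℝ) (hq : 0 < q) (ε : ℝ) (hε : 0 < ε) :
    ∫⁻ x in Set.Ioi ε, ∑' n : ℕ, ENNReal.ofReal (((n : ℝ) + 1) ^ (r - 2)) *
        μ {ω | x ^ q * ((n : ℝ) + 1) ^ (1 / p) < |S (n + 1) ω|} =
      ∑' n : ℕ, ENNReal.ofReal (((n : ℝ) + 1) ^ (r - 2 - 1 / (p * q))) *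
        ∫⁻ ω, ENNReal.ofReal
          (|S (n + 1) ω| ^ (1 / q) - ε * ((n : ℝ) + 1) ^ (1 / (p * q))) ∂μ := by
  set c : ℕ → ℝ := fun n => ((n : ℝ) + 1) ^ (1 / (p * q))
  set Y : ℕ → Ω → ℝ := fun n ω => |S (n + 1) ω| ^ (1 / q)
  have hc : ∀ n : ℕ, 0 < c n := fun n => by positivity
  have hY : ∀ n : ℕ, Measurable (Y n) := fun n =>
    (Real.continuous_rpow_const (by positivity)).measurable.comp (hS (n + 1)).abs
  have hrewrite : ∀ x ∈ Ioi ε, ∀ n : ℕ,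
      {ω | x ^ q * ((n : ℝ) + 1) ^ (1 / p) < |S (n + 1) ω|} = {ω | x * c n < Y n ω} :=
    fun x (hx : ε < x) n => Set.ext fun ω =>
      rpow_mul_rpow_lt_iff (hε.trans hx).le (by positivity) (abs_nonneg _) hq
  have hweight : ∀ n : ℕ,
      ENNReal.ofReal (((n : ℝ) + 1) ^ (r - 2)) * ENNReal.ofReal (c n)⁻¹ =
        ENNReal.ofReal (((n : ℝ) + 1) ^ (r - 2 - 1 / (p * q))) := fun n => by
    rw [← ENNReal.ofReal_mul (by positivity), ← div_eq_mul_inv,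
      ← Real.rpow_sub (by positivity)]
  rw [setLIntegral_congr_fun measurableSet_Ioi fun x hx =>
      tsum_congr fun n => congrArg (_ * μ ·) (hrewrite x hx n),
    lintegral_tsum fun n => ((measurable_measure_mul_lt μ (hc n).le).const_mul _).aemeasurable]
  refine tsum_congr fun n => ?_
  rw [lintegral_const_mul _ (measurable_measure_mul_lt μ (hc n).le),
    setLIntegral_Ioi_measure_mul_lt μ (hc n) (hY n).aemeasurable, ← mul_assoc, hweight]

/-- The identity (1.1) of Remark 1.1, as an identity in `[0, ∞]`:
`∫_ε^∞ ∑_{n≥1} n^{r-2} P(|S_n| > x^q n^{1/p}) dx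
  = ∑_{n≥1} n^{r-2-1/(pq)} E(|S_n|^{1/q} - ε n^{1/(pq)})⁺`. -/
theorem stmt_8 {Ω : Type*} [MeasurableSpace Ω] (μ : Measure Ω) [IsProbabilityMeasure μ]
    (S : ℕ → Ω → ℝ) (hS : ∀ n, Measurable (S n))
    (r p q : ℝ) (hp : 0 < p) (hq : 0 < q) (ε : ℝ) (hε : 0 < ε) :
    ∫⁻ x in Set.Ioi ε, ∑' n : ℕ, ENNReal.ofReal (((n : ℝ) + 1) ^ (r - 2)) *
        μ {ω | x ^ q * ((n : ℝ) + 1) ^ (1 / p) < |S (n + 1) ω|} =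
      ∑' n : ℕ, ENNReal.ofReal (((n : ℝ) + 1) ^ (r - 2 - 1 / (p * q))) *
        ∫⁻ ω, ENNReal.ofReal
          (|S (n + 1) ω| ^ (1 / q) - ε * ((n : ℝ) + 1) ^ (1 / (p * q))) ∂μ :=
  stmt_8_general μ S hS r p q hq ε hε
end

section
/- Let X be a random variable, 0 < p < 2, r > 1 and q > 0. Then ∫_ε^∞ ∑_{n≥1} n^{r−1} P( |X|^{1/q} > x n^{1/(pq)} ) dx < ∞ for all ε > 0 if and only if: E|X|^{1/q} < ∞ if q < 1/(pr); E[|X|^{pr} log⁺|X|] < ∞ if q = 1/(pr); E|X|^{pr} < ∞ if q > 1/(pr). -/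
/-!
Write `Y = |X|^{1/q}` and `α = 1/(pq)`. By Tonelli the integral in question is `E[T_ε(Y)]` with
`T_ε(y) = ∑_{n ≥ 1} n^{r-1} (y n^{-α} - ε)⁺`. Only the indices `n ≤ (y/ε)^{1/α}` contribute, each
by at most `y n^{r-1-α}`, and those with `n ≤ (y/2ε)^{1/α}` by at least half of that. So, up to
affine bounds, `T_ε(y)` is `y ∑_{n ≤ y^{1/α}} n^{r-1-α}`, which grows like `y`, `y log y` or
`y^{r/α}` according as `r < α`, `r = α` or `r > α`: the power sums are estimated by telescoping
Bernoulli's inequality, the harmonic sums by `log (n + 1) ≤ H_n ≤ 1 + log n`. As `μ` is finite,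
affine bounds in both directions make `E[T_ε(Y)] < ∞` equivalent to the matching moment condition.
-/

open MeasureTheory Finset Real
open scoped ENNReal

noncomputable section

namespace Real

lemma one_add_mul_max_le_rpow {u p : ℝ} (hu : -1 ≤ u) (hu0 : u ≤ 0) (hp : 0 < p) :
    1 + max 1 p * u ≤ (1 + u) ^ p := by
  rcases le_total 1 p with h | h
  · rw [max_eq_right h]
    exact one_add_mul_self_le_rpow_one_add hu h
  · rw [max_eq_left h, one_mul]
    calc 1 + u = (1 + u) ^ (1 : ℝ) := (rpow_one _).symm
      _ ≤ (1 + u) ^ p := rpow_le_rpow_of_exponent_ge' (by linarith) (by linarith) hp.le h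

lemma rpow_le_one_add_mul_min {u p : ℝ} (hu : -1 ≤ u) (hu0 : u ≤ 0) (hp : 0 < p) :
    (1 + u) ^ p ≤ 1 + min 1 p * u := by
  rcases le_total 1 p with h | h
  · rw [min_eq_left h, one_mul]
    calc (1 + u) ^ p ≤ (1 + u) ^ (1 : ℝ) :=
          rpow_le_rpow_of_exponent_ge' (by linarith) (by linarith) zero_le_one h
      _ = 1 + u := rpow_one _
  · rw [min_eq_right h]
    exact rpow_one_add_le_one_add_mul_self hu hp.le h

-- Bernoulli's inequalities above, rescaled by `t = k + 1` and `u = -1/t`.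
lemma natCast_add_one_rpow_sub_rpow_mem_Icc (k : ℕ) {p : ℝ} (hp : 0 < p) :
    ((k : ℝ) + 1) ^ p - (k : ℝ) ^ p ∈
      Set.Icc (min 1 p * ((k : ℝ) + 1) ^ (p - 1)) (max 1 p * ((k : ℝ) + 1) ^ (p - 1)) := by
  set t : ℝ := (k : ℝ) + 1
  have ht : 0 < t := by positivity
  have hu : -1 ≤ -t⁻¹ := neg_le_neg (inv_le_one_of_one_le₀ (by simp [t]))
  have hu0 : -t⁻¹ ≤ 0 := by simp [ht.le]
  have hk : (k : ℝ) ^ p = t ^ p * (1 + -t⁻¹) ^ p := by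
    rw [← mul_rpow ht.le (by linarith)]
    congr 1
    field_simp
    ring
  rw [Set.mem_Icc, hk, rpow_sub_one ht.ne']
  constructor
  · calc min 1 p * (t ^ p / t) = t ^ p * (-(min 1 p * -t⁻¹)) := by ring
      _ ≤ t ^ p * (1 - (1 + -t⁻¹) ^ p) := by
          gcongr; linarith [rpow_le_one_add_mul_min hu hu0 hp]
      _ = _ := by ring
  · calc t ^ p - t ^ p * (1 + -t⁻¹) ^ p = t ^ p * (1 - (1 + -t⁻¹) ^ p) := by ring
      _ ≤ t ^ p * (-(max 1 p * -t⁻¹)) := by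
          gcongr; linarith [one_add_mul_max_le_rpow hu hu0 hp]
      _ = _ := by ring

lemma natCast_rpow_mem_Icc (m : ℕ) {p : ℝ} (hp : 0 < p) :
    (m : ℝ) ^ p ∈ Set.Icc (min 1 p * ∑ k ∈ range m, ((k : ℝ) + 1) ^ (p - 1))
      (max 1 p * ∑ k ∈ range m, ((k : ℝ) + 1) ^ (p - 1)) := by
  have htel : ∑ k ∈ range m, (((k : ℝ) + 1) ^ p - (k : ℝ) ^ p) = (m : ℝ) ^ p := by
    have := Finset.sum_range_sub (fun i : ℕ => (i : ℝ) ^ p) m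
    push_cast at this
    rw [this, zero_rpow hp.ne', sub_zero]
  rw [← htel, mul_sum, mul_sum]
  exact ⟨sum_le_sum fun k _ => (natCast_add_one_rpow_sub_rpow_mem_Icc k hp).1,
    sum_le_sum fun k _ => (natCast_add_one_rpow_sub_rpow_mem_Icc k hp).2⟩

lemma rpow_sub_one_mul_div_rpow {t : ℝ} (ht : 0 < t) (α r y : ℝ) :
    t ^ (r - 1) * (y / t ^ α) = y * t ^ (r - α - 1) := by
  rw [show r - 1 = (r - α - 1) + α by ring, rpow_add ht]
  field_simp

lemma log_max_rpow_exp_one {y : ℝ} (hy : 0 < y) (q : ℝ) :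
    log (max (y ^ q) (exp 1)) = max (q * log y) 1 := by
  rcases le_total (y ^ q) (exp 1) with h | h
  · have := log_le_log (rpow_pos_of_pos hy q) h
    rw [log_rpow hy, log_exp] at this
    rw [max_eq_right h, max_eq_right this, log_exp]
  · have := log_le_log (exp_pos 1) h
    rw [log_rpow hy, log_exp] at this
    rw [max_eq_left h, max_eq_left this, log_rpow hy]

lemma mul_div_rpow_inv_rpow {y c α r : ℝ} (hy : 0 ≤ y) (hc : 0 < c) (hα : 0 < α) (hαr : α < r) :
    y * ((y / c) ^ α⁻¹) ^ (r - α) = c ^ ((α - r) / α) * y ^ (r / α) := by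
  have he : r / α = 1 + α⁻¹ * (r - α) := by field_simp; ring
  rw [← rpow_mul (div_nonneg hy hc.le), div_rpow hy hc.le, he,
    rpow_add' hy (he ▸ (div_pos (hα.trans hαr) hα).ne'), rpow_one,
    show (α - r) / α = -(α⁻¹ * (r - α)) by field_simp; ring, rpow_neg hc.le]
  ring

end Real

def powSum (s x : ℝ) : ℝ := ∑ k ∈ range ⌊x⌋₊, ((k : ℝ) + 1) ^ s

lemma powSum_nonneg (s x : ℝ) : 0 ≤ powSum s x :=
  sum_nonneg fun k _ => by positivity

lemma one_le_powSum (s : ℝ) {x : ℝ} (hx : 1 ≤ x) : 1 ≤ powSum s x := by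
  have h0 : 0 ∈ range ⌊x⌋₊ := mem_range.2 (Nat.floor_pos.2 hx)
  simpa [powSum] using
    single_le_sum (f := fun k : ℕ => ((k : ℝ) + 1) ^ s) (fun k _ => by positivity) h0

lemma powSum_le_tsum {s : ℝ} (hs : s < -1) (x : ℝ) :
    powSum s x ≤ ∑' k : ℕ, ((k : ℝ) + 1) ^ s := by
  have hsum : Summable fun k : ℕ => ((k : ℝ) + 1) ^ s := by
    simpa using (summable_nat_add_iff 1).2 (summable_nat_rpow.2 hs)
  exact hsum.sum_le_tsum _ fun k _ => by positivity

lemma powSum_sub_one_le {p x : ℝ} (hp : 0 < p) (hx : 0 ≤ x) :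
    powSum (p - 1) x ≤ x ^ p / min 1 p := by
  rw [le_div_iff₀ (lt_min one_pos hp), mul_comm]
  exact (natCast_rpow_mem_Icc _ hp).1.trans
    (rpow_le_rpow (Nat.cast_nonneg _) (Nat.floor_le hx) hp.le)

lemma rpow_le_powSum_sub_one {p x : ℝ} (hp : 0 < p) (hx : 1 ≤ x) :
    x ^ p ≤ 2 ^ p * max 1 p * powSum (p - 1) x := by
  have hfloor : x ≤ 2 * ⌊x⌋₊ := by
    have h1 : (1 : ℝ) ≤ ⌊x⌋₊ := by exact_mod_cast (Nat.one_le_floor_iff x).2 hx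
    linarith [Nat.lt_floor_add_one x]
  calc x ^ p ≤ (2 * ⌊x⌋₊ : ℝ) ^ p := rpow_le_rpow (by linarith) hfloor hp.le
    _ = 2 ^ p * (⌊x⌋₊ : ℝ) ^ p := mul_rpow zero_le_two (Nat.cast_nonneg _)
    _ ≤ 2 ^ p * max 1 p * powSum (p - 1) x := by
        rw [mul_assoc]; gcongr; exact (natCast_rpow_mem_Icc _ hp).2

lemma powSum_neg_one (x : ℝ) : powSum (-1) x = harmonic ⌊x⌋₊ := by
  simp [powSum, harmonic, rpow_neg_one]

lemma powSum_neg_one_le (x : ℝ) : powSum (-1) x ≤ 1 + log⁺ x := by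
  rcases lt_or_ge x 1 with hx | hx
  · simpa [powSum, Nat.floor_eq_zero.2 hx] using add_nonneg zero_le_one posLog_nonneg
  · rw [powSum_neg_one, posLog_eq_log (by rw [abs_of_nonneg (by linarith)]; exact hx)]
    have hm : (0 : ℝ) < ⌊x⌋₊ := by exact_mod_cast Nat.floor_pos.2 hx
    linarith [harmonic_le_one_add_log ⌊x⌋₊, log_le_log hm (Nat.floor_le (by linarith))]

lemma log_le_powSum_neg_one {x : ℝ} (hx : 0 < x) : log x ≤ powSum (-1) x := by
  rcases lt_or_ge x 1 with hx1 | hx1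
  · linarith [log_neg hx hx1, powSum_nonneg (-1) x]
  · rw [powSum_neg_one]
    calc log x ≤ log ((⌊x⌋₊ + 1 : ℕ) : ℝ) := by
          apply log_le_log hx; push_cast; exact (Nat.lt_floor_add_one x).le
      _ ≤ harmonic ⌊x⌋₊ := log_add_one_le_harmonic _

-- `∑_{n ≥ 1} n^{r-1} (y n^{-α} - ε)⁺` for `y ≥ 0` and `ε > 0`, summed over exactly the indices
-- where the summand is nonnegative (`lt_floor_rpow_inv_iff`).
def tailSum (α r ε y : ℝ) : ℝ :=
  ∑ n ∈ range ⌊(y / ε) ^ α⁻¹⌋₊, ((n : ℝ) + 1) ^ (r - 1) * (y / ((n : ℝ) + 1) ^ α - ε)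

section tailSum

variable {α r ε y : ℝ}

lemma lt_floor_rpow_inv_iff (hα : 0 < α) (hε : 0 < ε) (hy : 0 ≤ y) (n : ℕ) :
    n < ⌊(y / ε) ^ α⁻¹⌋₊ ↔ ε ≤ y / ((n : ℝ) + 1) ^ α := by
  have ht : 0 < ((n : ℝ) + 1) ^ α := by positivity
  rw [Nat.lt_iff_add_one_le, Nat.le_floor_iff (by positivity), Nat.cast_add_one,
    le_rpow_inv_iff_of_pos (by positivity) (by positivity) hα, le_div_iff₀ hε, le_div_iff₀ ht,
    mul_comm]

lemma tailSum_nonneg (hα : 0 < α) (hε : 0 < ε) (hy : 0 ≤ y) : 0 ≤ tailSum α r ε y :=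
  sum_nonneg fun n hn => mul_nonneg (by positivity)
    (sub_nonneg.2 ((lt_floor_rpow_inv_iff hα hε hy n).1 (mem_range.1 hn)))

lemma tsum_ofReal_mul_eq_ofReal_tailSum (hα : 0 < α) (hε : 0 < ε) (hy : 0 ≤ y) :
    ∑' n : ℕ, ENNReal.ofReal (((n : ℝ) + 1) ^ (r - 1)) *
        ENNReal.ofReal (y / ((n : ℝ) + 1) ^ α - ε) = ENNReal.ofReal (tailSum α r ε y) := by
  rw [tailSum, ENNReal.ofReal_sum_of_nonneg fun n hn => mul_nonneg (by positivity)
    (sub_nonneg.2 ((lt_floor_rpow_inv_iff hα hε hy n).1 (mem_range.1 hn)))]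
  refine (tsum_eq_sum fun n hn => ?_).trans (sum_congr rfl fun n _ => ?_)
  · rw [mem_range, lt_floor_rpow_inv_iff hα hε hy] at hn
    rw [ENNReal.ofReal_of_nonpos (sub_nonpos.2 (not_le.1 hn).le), mul_zero]
  · rw [ENNReal.ofReal_mul (by positivity)]

lemma tailSum_le (hε : 0 < ε) :
    tailSum α r ε y ≤ y * powSum (r - α - 1) ((y / ε) ^ α⁻¹) := by
  rw [powSum, mul_sum]
  refine sum_le_sum fun n _ => ?_
  have ht : (0 : ℝ) < (n : ℝ) + 1 := by positivity
  rw [mul_sub, rpow_sub_one_mul_div_rpow ht]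
  linarith [mul_nonneg (rpow_nonneg ht.le (r - 1)) hε.le]

lemma half_mul_powSum_le_tailSum (hα : 0 < α) (hε : 0 < ε) (hy : 0 ≤ y) :
    y / 2 * powSum (r - α - 1) ((y / (2 * ε)) ^ α⁻¹) ≤ tailSum α r ε y := by
  have h2ε : 0 < 2 * ε := by positivity
  rw [powSum, mul_sum]
  refine (sum_le_sum fun n hn => ?_).trans (sum_le_sum_of_subset_of_nonneg ?_ fun n hn _ => ?_)
  · have ht : (0 : ℝ) < (n : ℝ) + 1 := by positivity
    have hn := (lt_floor_rpow_inv_iff hα h2ε hy n).1 (mem_range.1 hn)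
    calc y / 2 * ((n : ℝ) + 1) ^ (r - α - 1)
        = ((n : ℝ) + 1) ^ (r - 1) * (y / ((n : ℝ) + 1) ^ α / 2) := by
          rw [mul_div_assoc', rpow_sub_one_mul_div_rpow ht]; ring
      _ ≤ ((n : ℝ) + 1) ^ (r - 1) * (y / ((n : ℝ) + 1) ^ α - ε) := by gcongr; linarith
  · intro n hn
    rw [mem_range, lt_floor_rpow_inv_iff hα h2ε hy] at hn
    rw [mem_range, lt_floor_rpow_inv_iff hα hε hy]
    linarith
  · exact mul_nonneg (by positivity)
      (sub_nonneg.2 ((lt_floor_rpow_inv_iff hα hε hy n).1 (mem_range.1 hn)))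

lemma le_two_mul_tailSum_add (hα : 0 < α) (hε : 0 < ε) (hy : 0 ≤ y) :
    y ≤ 2 * tailSum α r ε y + 2 * ε := by
  rcases lt_or_ge y (2 * ε) with h | h
  · linarith [tailSum_nonneg (r := r) hα hε hy]
  · have hM : 1 ≤ (y / (2 * ε)) ^ α⁻¹ :=
      one_le_rpow ((one_le_div (by positivity)).2 h) (by positivity)
    nlinarith [one_le_powSum (r - α - 1) hM, half_mul_powSum_le_tailSum (r := r) hα hε hy]

end tailSum

section Tonelli

variable {Ω : Type*} [MeasurableSpace Ω] (μ : Measure Ω) [SFinite μ]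

lemma lintegral_Ioi_measure_lt {Z : Ω → ℝ} (hZ : Measurable Z) (ε : ℝ) :
    ∫⁻ x in Set.Ioi ε, μ {ω | x < Z ω} = ∫⁻ ω, ENNReal.ofReal (Z ω - ε) ∂μ := by
  have hS : MeasurableSet {z : ℝ × Ω | z.1 < Z z.2} :=
    measurableSet_lt measurable_fst (hZ.comp measurable_snd)
  calc ∫⁻ x in Set.Ioi ε, μ {ω | x < Z ω}
      = (volume.restrict (Set.Ioi ε)).prod μ {z | z.1 < Z z.2} := (Measure.prod_apply hS).symm
    _ = ∫⁻ ω, volume.restrict (Set.Ioi ε) (Set.Iio (Z ω)) ∂μ := Measure.prod_apply_symm hS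
    _ = ∫⁻ ω, ENNReal.ofReal (Z ω - ε) ∂μ := by
        simp_rw [Measure.restrict_apply' measurableSet_Ioi, Set.Iio_inter_Ioi, Real.volume_Ioo]

lemma lintegral_Ioi_tsum_mul_measure_mul_lt {Y : Ω → ℝ} (hY : Measurable Y) (a : ℕ → ℝ≥0∞)
    {c : ℕ → ℝ} (hc : ∀ n, 0 < c n) (ε : ℝ) :
    ∫⁻ x in Set.Ioi ε, ∑' n, a n * μ {ω | x * c n < Y ω}
      = ∫⁻ ω, ∑' n, a n * ENNReal.ofReal (Y ω / c n - ε) ∂μ := by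
  have hset : ∀ n x, {ω | x * c n < Y ω} = {ω | x < Y ω / c n} := fun n x => by
    ext ω; exact (lt_div_iff₀ (hc n)).symm
  have hmeas : ∀ n, Measurable fun x => μ {ω | x < Y ω / c n} := fun n =>
    measurable_measure_prodMk_left (measurableSet_lt measurable_fst
      ((hY.div_const (c n)).comp measurable_snd))
  have hmeas' : ∀ n, Measurable fun ω => ENNReal.ofReal (Y ω / c n - ε) := fun n =>
    ((hY.div_const _).sub_const _).ennreal_ofReal
  simp_rw [hset]
  rw [lintegral_tsum fun n => ((hmeas n).const_mul _).aemeasurable,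
    lintegral_tsum fun n => ((hmeas' n).const_mul _).aemeasurable]
  congr 1; ext n
  rw [lintegral_const_mul _ (hmeas n), lintegral_const_mul _ (hmeas' n),
    lintegral_Ioi_measure_lt μ (hY.div_const (c n))]

lemma forall_lintegral_Ioi_tsum_lt_top_iff {Y : Ω → ℝ} (hY : Measurable Y) (hY0 : ∀ ω, 0 ≤ Y ω)
    {α : ℝ} (hα : 0 < α) (r : ℝ) :
    (∀ ε : ℝ, 0 < ε → ∫⁻ x in Set.Ioi ε, ∑' n : ℕ, ENNReal.ofReal (((n : ℝ) + 1) ^ (r - 1)) *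
        μ {ω | x * ((n : ℝ) + 1) ^ α < Y ω} < ⊤) ↔
      ∀ ε : ℝ, 0 < ε → ∫⁻ ω, ENNReal.ofReal (tailSum α r ε (Y ω)) ∂μ < ⊤ :=
  forall₂_congr fun ε hε => by
    rw [lintegral_Ioi_tsum_mul_measure_mul_lt μ hY _ (c := fun n : ℕ => ((n : ℝ) + 1) ^ α)
      (fun n => by positivity),
      lintegral_congr fun ω => tsum_ofReal_mul_eq_ofReal_tailSum hα hε (hY0 ω)]

end Tonelli

def AffinelyDominated (f g : ℝ → ℝ) : Prop :=
  ∃ A B : ℝ, 0 ≤ A ∧ ∀ y, 0 ≤ y → f y ≤ A * g y + B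

section dominations

variable {α r ε : ℝ}

lemma affinelyDominated_tailSum_id (hrα : r < α) (hε : 0 < ε) :
    AffinelyDominated (tailSum α r ε) fun y => y := by
  refine ⟨∑' k : ℕ, ((k : ℝ) + 1) ^ (r - α - 1), 0, tsum_nonneg fun _ => by positivity,
    fun y hy => ?_⟩
  have hP := powSum_le_tsum (by linarith : r - α - 1 < -1) ((y / ε) ^ α⁻¹)
  nlinarith [tailSum_le (α := α) (r := r) (y := y) hε]

lemma affinelyDominated_id_tailSum (hα : 0 < α) (hε : 0 < ε) :
    AffinelyDominated (fun y => y) (tailSum α r ε) :=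
  ⟨2, 2 * ε, zero_le_two, fun _ hy => le_two_mul_tailSum_add hα hε hy⟩

lemma affinelyDominated_tailSum_mul_log (hr : 0 < r) {q : ℝ} (hq : 0 < q) (hε : 0 < ε) :
    AffinelyDominated (tailSum r r ε) fun y => y * log (max (y ^ q) (exp 1)) := by
  refine ⟨1 + (1 / q + |log ε|) / r, 0, by positivity, fun y hy => ?_⟩
  rcases hy.eq_or_lt with rfl | hy
  · simpa using tailSum_le (α := r) (r := r) (y := 0) hε
  set L := log (max (y ^ q) (exp 1))
  have hL : L = max (q * log y) 1 := log_max_rpow_exp_one hy q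
  have hL1 : 1 ≤ L := hL ▸ le_max_right _ _
  have hlogy : log y ≤ L / q := by rw [le_div_iff₀ hq, mul_comm]; exact hL ▸ le_max_left _ _
  have hposLog : log⁺ ((y / ε) ^ r⁻¹) ≤ (L / q + |log ε|) / r := by
    rw [posLog_apply, log_rpow (div_pos hy hε), log_div hy.ne' hε.ne', inv_mul_eq_div]
    exact max_le (by positivity) (by gcongr; linarith [neg_le_abs (log ε)])
  calc tailSum r r ε y ≤ y * powSum (-1) ((y / ε) ^ r⁻¹) := by
        simpa using tailSum_le (α := r) (r := r) (y := y) hε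
    _ ≤ y * (1 + (L / q + |log ε|) / r) := by
        gcongr; linarith [powSum_neg_one_le ((y / ε) ^ r⁻¹)]
    _ ≤ (1 + (1 / q + |log ε|) / r) * (y * L) + 0 := by
        have : (L / q + |log ε|) / r ≤ (1 / q + |log ε|) / r * L := by
          rw [div_mul_eq_mul_div, add_mul, one_div_mul_eq_div]
          gcongr; exact le_mul_of_one_le_right (abs_nonneg _) hL1
        nlinarith

lemma affinelyDominated_mul_log_tailSum (hr : 0 < r) {q : ℝ} (hq : 0 < q) (hε : 0 < ε) :
    AffinelyDominated (fun y => y * log (max (y ^ q) (exp 1))) (tailSum r r ε) := by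
  set c := |log (2 * ε)|
  refine ⟨2 * q * r + 2 * (1 + q * c), 2 * ε * (1 + q * c), by positivity, fun y hy => ?_⟩
  have hT0 := tailSum_nonneg (r := r) hr hε hy
  rcases hy.eq_or_lt with rfl | hy
  · simp only [zero_mul]; positivity
  have hT1 := le_two_mul_tailSum_add (r := r) hr hε hy.le
  have hT2 : y * (log y - log (2 * ε)) ≤ 2 * r * tailSum r r ε y := by
    have hM := log_le_powSum_neg_one (rpow_pos_of_pos (div_pos hy (by positivity : 0 < 2 * ε)) r⁻¹)
    rw [log_rpow (by positivity), log_div hy.ne' (by positivity)] at hM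
    calc y * (log y - log (2 * ε)) = 2 * r * (y / 2 * (r⁻¹ * (log y - log (2 * ε)))) := by
          field_simp
      _ ≤ 2 * r * (y / 2 * powSum (-1) ((y / (2 * ε)) ^ r⁻¹)) := by gcongr
      _ ≤ 2 * r * tailSum r r ε y := by
          gcongr; simpa using half_mul_powSum_le_tailSum (α := r) (r := r) hr hε hy.le
  have hlog : q * (y * log y) ≤ q * (2 * r * tailSum r r ε y + c * y) := by
    gcongr
    linarith [mul_le_mul_of_nonneg_left (le_abs_self (log (2 * ε))) hy.le]
  show y * log (max (y ^ q) (exp 1)) ≤ _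
  rw [log_max_rpow_exp_one hy, mul_max_of_nonneg _ _ hy.le, mul_one, mul_left_comm]
  have hqc : 0 ≤ q * c := by positivity
  refine max_le ?_ ?_ <;> nlinarith [mul_le_mul_of_nonneg_left hT1 hqc, mul_nonneg hqc hT0,
    mul_nonneg (mul_nonneg hq.le hr.le) hT0, mul_nonneg hqc hε.le]

lemma affinelyDominated_tailSum_rpow (hα : 0 < α) (hαr : α < r) (hε : 0 < ε) :
    AffinelyDominated (tailSum α r ε) fun y => y ^ (r / α) := by
  have hp : 0 < r - α := by linarith
  refine ⟨ε ^ ((α - r) / α) / min 1 (r - α), 0, by positivity, fun y hy => ?_⟩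
  calc tailSum α r ε y ≤ y * powSum (r - α - 1) ((y / ε) ^ α⁻¹) := tailSum_le hε
    _ ≤ y * (((y / ε) ^ α⁻¹) ^ (r - α) / min 1 (r - α)) := by
        gcongr; exact powSum_sub_one_le hp (by positivity)
    _ = ε ^ ((α - r) / α) / min 1 (r - α) * y ^ (r / α) + 0 := by
        rw [mul_div_assoc', mul_div_rpow_inv_rpow hy hε hα hαr]; ring

lemma affinelyDominated_rpow_tailSum (hα : 0 < α) (hαr : α < r) (hε : 0 < ε) :
    AffinelyDominated (fun y => y ^ (r / α)) (tailSum α r ε) := by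
  have hp : 0 < r - α := by linarith
  have h2ε : 0 < 2 * ε := by positivity
  set C := 2 * 2 ^ (r - α) * max 1 (r - α)
  refine ⟨C / (2 * ε) ^ ((α - r) / α), (2 * ε) ^ (r / α), by positivity, fun y hy => ?_⟩
  have hT0 := tailSum_nonneg (r := r) hα hε hy
  rcases lt_or_ge y (2 * ε) with h | h
  · have : y ^ (r / α) ≤ (2 * ε) ^ (r / α) :=
      rpow_le_rpow hy h.le (div_pos (hα.trans hαr) hα).le
    have : 0 ≤ C / (2 * ε) ^ ((α - r) / α) * tailSum α r ε y := by positivity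
    linarith
  have hM : 1 ≤ (y / (2 * ε)) ^ α⁻¹ := one_le_rpow ((one_le_div h2ε).2 h) (by positivity)
  have key : (2 * ε) ^ ((α - r) / α) * y ^ (r / α) ≤ C * tailSum α r ε y := by
    rw [← mul_div_rpow_inv_rpow hy h2ε hα hαr]
    calc y * ((y / (2 * ε)) ^ α⁻¹) ^ (r - α)
        ≤ y * (2 ^ (r - α) * max 1 (r - α) * powSum (r - α - 1) ((y / (2 * ε)) ^ α⁻¹)) := by
          gcongr; exact rpow_le_powSum_sub_one hp hM
      _ = C * (y / 2 * powSum (r - α - 1) ((y / (2 * ε)) ^ α⁻¹)) := by ring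
      _ ≤ C * tailSum α r ε y := by gcongr; exact half_mul_powSum_le_tailSum hα hε hy
  calc y ^ (r / α) ≤ C * tailSum α r ε y / (2 * ε) ^ ((α - r) / α) :=
        (le_div_iff₀' (by positivity)).2 key
    _ ≤ C / (2 * ε) ^ ((α - r) / α) * tailSum α r ε y + (2 * ε) ^ (r / α) := by
        rw [div_mul_eq_mul_div]; exact le_add_of_nonneg_right (by positivity)

end dominations

section integrability

variable {Ω : Type*} [MeasurableSpace Ω] {μ : Measure Ω} {Y : Ω → ℝ}

lemma AffinelyDominated.lintegral_ofReal_lt_top [IsFiniteMeasure μ] {f g : ℝ → ℝ}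
    (h : AffinelyDominated f g) (hY : ∀ ω, 0 ≤ Y ω)
    (hg : ∫⁻ ω, ENNReal.ofReal (g (Y ω)) ∂μ < ⊤) :
    ∫⁻ ω, ENNReal.ofReal (f (Y ω)) ∂μ < ⊤ := by
  obtain ⟨A, B, hA, hfg⟩ := h
  calc ∫⁻ ω, ENNReal.ofReal (f (Y ω)) ∂μ
      ≤ ∫⁻ ω, ENNReal.ofReal A * ENNReal.ofReal (g (Y ω)) + ENNReal.ofReal B ∂μ :=
        lintegral_mono fun ω => (ENNReal.ofReal_le_ofReal (hfg _ (hY ω))).trans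
          (by rw [← ENNReal.ofReal_mul hA]; exact ENNReal.ofReal_add_le)
    _ = ENNReal.ofReal A * ∫⁻ ω, ENNReal.ofReal (g (Y ω)) ∂μ + ENNReal.ofReal B * μ Set.univ := by
        rw [lintegral_add_right _ measurable_const, lintegral_const,
          lintegral_const_mul' _ _ ENNReal.ofReal_ne_top]
    _ < ⊤ := ENNReal.add_lt_top.2 ⟨ENNReal.mul_lt_top ENNReal.ofReal_lt_top hg,
        ENNReal.mul_lt_top ENNReal.ofReal_lt_top (measure_lt_top μ Set.univ)⟩

lemma forall_lintegral_tailSum_lt_top_iff_integrable [IsFiniteMeasure μ] {α r : ℝ}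
    {φ : ℝ → ℝ} (hY : Measurable Y) (hY0 : ∀ ω, 0 ≤ Y ω) (hφ : Measurable φ)
    (hφ0 : ∀ y, 0 ≤ y → 0 ≤ φ y) (hlow : AffinelyDominated φ (tailSum α r 1))
    (hup : ∀ ε, 0 < ε → AffinelyDominated (tailSum α r ε) φ) :
    (∀ ε, 0 < ε → ∫⁻ ω, ENNReal.ofReal (tailSum α r ε (Y ω)) ∂μ < ⊤) ↔
      Integrable (fun ω => φ (Y ω)) μ := by
  rw [← lintegral_ofReal_ne_top_iff_integrable (f := fun ω => φ (Y ω))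
    (hφ.comp hY).aestronglyMeasurable (ae_of_all _ fun ω => hφ0 _ (hY0 ω)), ← lt_top_iff_ne_top]
  exact ⟨fun h => hlow.lintegral_ofReal_lt_top hY0 (h 1 one_pos),
    fun h ε hε => (hup ε hε).lintegral_ofReal_lt_top hY0 h⟩

lemma forall_lintegral_tailSum_lt_top_iff_of_lt [IsFiniteMeasure μ] {α r : ℝ}
    (hY : Measurable Y) (hY0 : ∀ ω, 0 ≤ Y ω) (hα : 0 < α) (hrα : r < α) :
    (∀ ε, 0 < ε → ∫⁻ ω, ENNReal.ofReal (tailSum α r ε (Y ω)) ∂μ < ⊤) ↔ Integrable Y μ :=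
  forall_lintegral_tailSum_lt_top_iff_integrable hY hY0 measurable_id' (fun _ hy => hy)
    (affinelyDominated_id_tailSum hα one_pos) fun _ hε => affinelyDominated_tailSum_id hrα hε

lemma forall_lintegral_tailSum_self_lt_top_iff [IsFiniteMeasure μ] {r q : ℝ}
    (hY : Measurable Y) (hY0 : ∀ ω, 0 ≤ Y ω) (hr : 0 < r) (hq : 0 < q) :
    (∀ ε, 0 < ε → ∫⁻ ω, ENNReal.ofReal (tailSum r r ε (Y ω)) ∂μ < ⊤) ↔
      Integrable (fun ω => Y ω * log (max (Y ω ^ q) (exp 1))) μ :=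
  forall_lintegral_tailSum_lt_top_iff_integrable hY hY0 (by fun_prop)
    (fun _ hy => mul_nonneg hy (log_nonneg ((one_le_exp zero_le_one).trans (le_max_right _ _))))
    (affinelyDominated_mul_log_tailSum hr hq one_pos)
    fun _ hε => affinelyDominated_tailSum_mul_log hr hq hε

lemma forall_lintegral_tailSum_lt_top_iff_of_gt [IsFiniteMeasure μ] {α r : ℝ}
    (hY : Measurable Y) (hY0 : ∀ ω, 0 ≤ Y ω) (hα : 0 < α) (hαr : α < r) :
    (∀ ε, 0 < ε → ∫⁻ ω, ENNReal.ofReal (tailSum α r ε (Y ω)) ∂μ < ⊤) ↔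
      Integrable (fun ω => Y ω ^ (r / α)) μ :=
  forall_lintegral_tailSum_lt_top_iff_integrable hY hY0 (by fun_prop) (fun _ hy => rpow_nonneg hy _)
    (affinelyDominated_rpow_tailSum hα hαr one_pos)
    fun _ hε => affinelyDominated_tailSum_rpow hα hαr hε

end integrability

theorem stmt_15_general {Ω : Type*} [MeasurableSpace Ω] (μ : Measure Ω) [IsProbabilityMeasure μ]
    (X : Ω → ℝ) (hmeas : Measurable X)
    (p r q : ℝ) (hp0 : 0 < p) (hr : 1 < r) (hq : 0 < q) :
    (∀ ε : ℝ, 0 < ε →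
        ∫⁻ x in Set.Ioi ε, ∑' n : ℕ, ENNReal.ofReal (((n : ℝ) + 1) ^ (r - 1)) *
          μ {ω | x * ((n : ℝ) + 1) ^ (1 / (p * q)) < |X ω| ^ (1 / q)} < ⊤) ↔
      ((q < 1 / (p * r) → Integrable (fun ω => |X ω| ^ (1 / q)) μ) ∧
       (q = 1 / (p * r) →
          Integrable (fun ω => |X ω| ^ (p * r) * Real.log (max |X ω| (Real.exp 1))) μ) ∧
       (1 / (p * r) < q → Integrable (fun ω => |X ω| ^ (p * r)) μ)) := by
  have hr0 : 0 < r := zero_lt_one.trans hr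
  have hα : 0 < 1 / (p * q) := by positivity
  have hY : Measurable fun ω => |X ω| ^ (1 / q) := hmeas.abs.pow_const _
  have hY0 : ∀ ω, 0 ≤ |X ω| ^ (1 / q) := fun ω => by positivity
  rw [forall_lintegral_Ioi_tsum_lt_top_iff μ hY hY0 hα r]
  rcases lt_trichotomy q (1 / (p * r)) with h | h | h
  · have hrα : r < 1 / (p * q) := by
      rw [lt_div_iff₀ (by positivity)] at h ⊢; linarith
    rw [forall_lintegral_tailSum_lt_top_iff_of_lt hY hY0 hα hrα]
    simp only [h, h.ne, not_lt_of_gt h, true_implies, false_implies, and_true]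
  · have hαr : 1 / (p * q) = r := by rw [h]; field_simp
    rw [hαr, forall_lintegral_tailSum_self_lt_top_iff hY hY0 hr0 hq]
    simp only [iff_true_intro h, not_lt_of_ge h.ge, not_lt_of_ge h.le, true_implies,
      false_implies, and_true, true_and]
    refine integrable_congr (ae_of_all _ fun ω => ?_)
    dsimp only
    rw [← rpow_mul (abs_nonneg _), one_div_mul_cancel hq.ne', rpow_one, h]
    field_simp
  · have hαr : 1 / (p * q) < r := by
      rw [div_lt_iff₀ (by positivity)] at h ⊢; linarith
    rw [forall_lintegral_tailSum_lt_top_iff_of_gt hY hY0 hα hαr]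
    simp only [h, h.ne', not_lt_of_gt h, true_implies, false_implies, true_and]
    refine integrable_congr (ae_of_all _ fun ω => ?_)
    dsimp only
    rw [← rpow_mul (abs_nonneg _)]
    field_simp

/-- The equivalence (from Lemma 3.2 applied in the proof of Theorem 2.1):
`∫_ε^∞ ∑_{n≥1} n^{r-1} P(|X|^{1/q} > x n^{1/(pq)}) dx < ∞` for all `ε > 0` iff the
moment condition depending on the relation of `q` to `1/(pr)` holds. -/
theorem stmt_15 {Ω : Type*} [MeasurableSpace Ω] (μ : Measure Ω) [IsProbabilityMeasure μ]
    (X : Ω → ℝ) (hmeas : Measurable X)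
    (p r q : ℝ) (hp0 : 0 < p) (hp2 : p < 2) (hr : 1 < r) (hq : 0 < q) :
    (∀ ε : ℝ, 0 < ε →
        ∫⁻ x in Set.Ioi ε, ∑' n : ℕ, ENNReal.ofReal (((n : ℝ) + 1) ^ (r - 1)) *
          μ {ω | x * ((n : ℝ) + 1) ^ (1 / (p * q)) < |X ω| ^ (1 / q)} < ⊤) ↔
      ((q < 1 / (p * r) → Integrable (fun ω => |X ω| ^ (1 / q)) μ) ∧
       (q = 1 / (p * r) →
          Integrable (fun ω => |X ω| ^ (p * r) * Real.log (max |X ω| (Real.exp 1))) μ) ∧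
       (1 / (p * r) < q → Integrable (fun ω => |X ω| ^ (p * r)) μ)) :=
  stmt_15_general μ X hmeas p r q hp0 hr hq

end
end

section
/- Let {X_i; 1 ≤ i ≤ n} be negatively associated random variables, let t_1, ..., t_n be real numbers, and let N ≥ 1 be an integer. Then the probability that at least N of the events {X_i > t_i}, 1 ≤ i ≤ n, occur simultaneously is at most ( ∑_{i=1}^n P(X_i > t_i) )^N; that is, P( #{ i ∈ {1,...,n} : X_i > t_i } ≥ N ) ≤ ( ∑_{i=1}^n P(X_i > t_i) )^N. -/
/-!
Let `s i = {X i > t i}`. If at least `N` of the events `s i` occur, then some `N` distinct indices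
`f 0, …, f (N-1)` have `s (f j)` all occurring, so by the union bound the probability is at most
the sum over injective tuples `f` of `P(⋂ j, s (f j))`. Negative association, applied to the
indicators of upper orthants (which are coordinatewise nondecreasing), gives
`P(⋂ j, s (f j)) ≤ ∏ j, P(s (f j))` by induction on the number of indices. Dropping the
injectivity constraint only adds nonnegative terms, and the sum over all tuples is
`(∑ i, P(s i)) ^ N`.
-/

open MeasureTheory Finset

noncomputable section

theorem measureReal_setOf_le_card_le_sum_pow {ι Ω : Type*} [Fintype ι] [MeasurableSpace Ω]
    {μ : Measure Ω} [IsFiniteMeasure μ] (s : ι → Set Ω) [∀ i, DecidablePred (· ∈ s i)]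
    (hs : ∀ S : Finset ι, μ.real (⋂ i ∈ S, s i) ≤ ∏ i ∈ S, μ.real (s i)) (N : ℕ) :
    μ.real {ω | N ≤ #{i | ω ∈ s i}} ≤ (∑ i, μ.real (s i)) ^ N := by
  have hcover : {ω | N ≤ #{i | ω ∈ s i}} ⊆ ⋃ f : Fin N ↪ ι, ⋂ j, s (f j) := by
    intro ω hω
    let f : Fin N ↪ ι := ((Fin.castLEEmb hω).trans (equivFin _).symm.toEmbedding).trans
      (Function.Embedding.subtype _)
    exact Set.mem_iUnion.2 ⟨f, Set.mem_iInter.2 fun j =>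
      (mem_filter.1 ((equivFin _).symm (Fin.castLE hω j)).2).2⟩
  calc μ.real {ω | N ≤ #{i | ω ∈ s i}}
      ≤ ∑ f : Fin N ↪ ι, μ.real (⋂ j, s (f j)) :=
        (measureReal_mono hcover).trans (measureReal_iUnion_fintype_le _)
    _ ≤ ∑ f : Fin N ↪ ι, ∏ j, μ.real (s (f j)) := by
        gcongr with f
        classical
        simpa [prod_map] using hs (univ.map f)
    _ ≤ ∑ f : Fin N → ι, ∏ j, μ.real (s (f j)) :=
        (sum_map univ ⟨_, DFunLike.coe_injective⟩
          fun f : Fin N → ι => ∏ j, μ.real (s (f j))).symm.trans_le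
        (sum_le_sum_of_subset_of_nonneg (subset_univ _) fun _ _ _ =>
          prod_nonneg fun _ _ => measureReal_nonneg)
    _ = (∑ i, μ.real (s i)) ^ N := (Fintype.sum_pow (fun i => μ.real (s i)) N).symm

namespace NegAssoc

variable {ι : Type*}

def orthantIndicator (A : Finset ι) (t : ι → ℝ) : (ι → ℝ) → ℝ :=
  {x | ∀ i ∈ A, t i < x i}.indicator 1

theorem orthantIndicator_le_of_le {A : Finset ι} (t : ι → ℝ) {x y : ι → ℝ}
    (hxy : ∀ i ∈ A, x i ≤ y i) : orthantIndicator A t x ≤ orthantIndicator A t y := by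
  simp only [orthantIndicator, Set.indicator_apply, Set.mem_ofPred_eq, Pi.one_apply]
  split_ifs with hx hy hy
  exacts [le_rfl, absurd (fun i hi => (hx i hi).trans_le (hxy i hi)) hy, zero_le_one, le_rfl]

theorem orthantIndicator_comp {Ω : Type*} (A : Finset ι) (t : ι → ℝ) (X : ι → Ω → ℝ) :
    (fun ω => orthantIndicator A t (fun i => X i ω)) =
      (⋂ i ∈ A, {ω | t i < X i ω}).indicator 1 := by
  classical
  ext ω
  simp only [orthantIndicator, Set.indicator_apply, Set.mem_iInter, Set.mem_ofPred_eq,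
    Pi.one_apply]

variable {Ω : Type*} [MeasurableSpace Ω] {μ : Measure Ω} [IsFiniteMeasure μ] {X : ι → Ω → ℝ}

theorem measureReal_inter_le_mul (hNA : NegAssoc μ X) (hX : ∀ i, Measurable (X i))
    (t : ι → ℝ) {A B : Finset ι} (hA : A.Nonempty) (hB : B.Nonempty) (hAB : Disjoint A B) :
    μ.real ((⋂ i ∈ A, {ω | t i < X i ω}) ∩ ⋂ i ∈ B, {ω | t i < X i ω}) ≤
      μ.real (⋂ i ∈ A, {ω | t i < X i ω}) * μ.real (⋂ i ∈ B, {ω | t i < X i ω}) := by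
  have hmeas : ∀ S : Finset ι, MeasurableSet (⋂ i ∈ S, {ω | t i < X i ω}) := fun S =>
    .biInter S.countable_toSet fun i _ => measurableSet_lt measurable_const (hX i)
  have hint : ∀ S : Finset ι, Integrable (fun ω => orthantIndicator S t (fun i => X i ω)) μ :=
    fun S => by rw [orthantIndicator_comp]; exact (integrable_const 1).indicator (hmeas S)
  have hprod : (fun ω => orthantIndicator A t (fun i => X i ω) *
      orthantIndicator B t (fun i => X i ω)) =
      ((⋂ i ∈ A, {ω | t i < X i ω}) ∩ ⋂ i ∈ B, {ω | t i < X i ω}).indicator 1 := by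
    rw [Set.inter_indicator_one, ← orthantIndicator_comp, ← orthantIndicator_comp]
    rfl
  have := hNA A B hA hB hAB _ _ (fun _ _ => orthantIndicator_le_of_le t)
    (fun _ _ => orthantIndicator_le_of_le t) (hint A) (hint B)
    (by rw [hprod]; exact (integrable_const 1).indicator ((hmeas A).inter (hmeas B)))
  simpa only [hprod, orthantIndicator_comp, integral_indicator_one (hmeas _),
    integral_indicator_one ((hmeas A).inter (hmeas B))] using this

theorem measureReal_biInter_le_prod [IsProbabilityMeasure μ] (hNA : NegAssoc μ X)
    (hX : ∀ i, Measurable (X i)) (t : ι → ℝ) (S : Finset ι) :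
    μ.real (⋂ i ∈ S, {ω | t i < X i ω}) ≤ ∏ i ∈ S, μ.real {ω | t i < X i ω} := by
  classical
  induction S using Finset.induction_on with
  | empty => simp
  | insert j S hj ih =>
    rcases S.eq_empty_or_nonempty with rfl | hS
    · simp
    calc μ.real (⋂ i ∈ insert j S, {ω | t i < X i ω})
        = μ.real ((⋂ i ∈ ({j} : Finset ι), {ω | t i < X i ω}) ∩
            ⋂ i ∈ S, {ω | t i < X i ω}) := by
          rw [Finset.set_biInter_insert, Finset.set_biInter_singleton]
      _ ≤ μ.real (⋂ i ∈ ({j} : Finset ι), {ω | t i < X i ω}) *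
            μ.real (⋂ i ∈ S, {ω | t i < X i ω}) :=
          hNA.measureReal_inter_le_mul hX t (singleton_nonempty j) hS
            (disjoint_singleton_left.2 hj)
      _ ≤ μ.real {ω | t j < X j ω} * ∏ i ∈ S, μ.real {ω | t i < X i ω} := by
          rw [Finset.set_biInter_singleton]
          gcongr
      _ = ∏ i ∈ insert j S, μ.real {ω | t i < X i ω} := by rw [prod_insert hj]

end NegAssoc

theorem stmt_17_general {Ω : Type*} [MeasurableSpace Ω] (μ : Measure Ω) [IsProbabilityMeasure μ]
    (n : ℕ) (X : Fin n → Ω → ℝ) (hmeas : ∀ i, Measurable (X i))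
    (hNA : NegAssoc μ X) (t : Fin n → ℝ) (N : ℕ) :
    (μ {ω | N ≤ (Finset.univ.filter fun i : Fin n => t i < X i ω).card}).toReal ≤
      (∑ i : Fin n, (μ {ω | t i < X i ω}).toReal) ^ N :=
  measureReal_setOf_le_card_le_sum_pow (fun i => {ω | t i < X i ω})
    (hNA.measureReal_biInter_le_prod hmeas t) N

/-- For negatively associated random variables `X_1, …, X_n` and reals `t_1, …, t_n`,
the probability that at least `N` of the events `{X_i > t_i}` occur simultaneously is
at most `(∑_{i=1}^n P(X_i > t_i))^N`. -/
theorem stmt_17 {Ω : Type*} [MeasurableSpace Ω] (μ : Measure Ω) [IsProbabilityMeasure μ]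
    (n : ℕ) (X : Fin n → Ω → ℝ) (hmeas : ∀ i, Measurable (X i))
    (hNA : NegAssoc μ X) (t : Fin n → ℝ) (N : ℕ) (hN : 1 ≤ N) :
    (μ {ω | N ≤ (Finset.univ.filter fun i : Fin n => t i < X i ω).card}).toReal ≤
      (∑ i : Fin n, (μ {ω | t i < X i ω}).toReal) ^ N :=
  stmt_17_general μ n X hmeas hNA t N

end
end
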